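/- For a matroid M with at least one element, all coefficients t_{ij} of the Tutte polynomial T_M(x,y) are nonnegative, and the constant coefficient t_{00} is zero. -/

import Mathlib

/-!
Nonnegativity follows from deletion–contraction: if `e` is a loop then `T_M = y T_{M∖e}`, if
`e` is a coloop then `T_M = x T_{M∖e}`, and otherwise `T_M = T_{M∖e} + T_{M/e}`, so induction on
`|E|` reduces everything to `T = 1` for the empty matroid.

The constant coefficient is `T_M(0,0) = Σ_{S ⊆ E} (-1)^{r(E) - r(S) + |S| - r(S)}
= (-1)^{r(E)} Σ_{S ⊆ E} (-1)^{|S|}`, which vanishes when `E` is nonempty.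
-/

structure RankMatroid (α : Type*) [DecidableEq α] where
  E : Finset α
  r : Finset α → ℕ
  r_empty : r ∅ = 0
  r_le_card : ∀ S, S ⊆ E → r S ≤ S.card
  r_mono : ∀ S T, S ⊆ T → T ⊆ E → r S ≤ r T
  r_submod : ∀ S T, S ⊆ E → T ⊆ E → r (S ∪ T) + r (S ∩ T) ≤ r S + r T

namespace RankMatroid

variable {α : Type*} [DecidableEq α] (M : RankMatroid α)

/-- Tutte polynomial, `x = X 0`, `y = X 1`. -/
noncomputable def tutte : MvPolynomial (Fin 2) ℤ :=
  ∑ S ∈ M.E.powerset,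
    (MvPolynomial.X 0 - 1) ^ (M.r M.E - M.r S) *
      (MvPolynomial.X 1 - 1) ^ (S.card - M.r S)

end RankMatroid

open Finset MvPolynomial

section CoeffNonneg

variable {σ R : Type*} [CommSemiring R] [PartialOrder R] [IsOrderedRing R]

theorem MvPolynomial.coeff_mul_nonneg {p q : MvPolynomial σ R} (hp : ∀ d, 0 ≤ coeff d p)
    (hq : ∀ d, 0 ≤ coeff d q) (d : σ →₀ ℕ) : 0 ≤ coeff d (p * q) := by
  classical
  rw [coeff_mul]
  exact sum_nonneg fun x _ => mul_nonneg (hp _) (hq _)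

theorem MvPolynomial.coeff_X_nonneg [DecidableEq σ] (i : σ) (d : σ →₀ ℕ) :
    0 ≤ coeff d (X i : MvPolynomial σ R) := by
  rw [coeff_X]
  split_ifs <;> simp

theorem MvPolynomial.coeff_one_nonneg [DecidableEq σ] (d : σ →₀ ℕ) :
    0 ≤ coeff d (1 : MvPolynomial σ R) := by
  rw [coeff_one]
  split_ifs <;> simp

end CoeffNonneg

namespace RankMatroid

variable {α : Type*} [DecidableEq α] (M : RankMatroid α) {e : α} {S : Finset α}

def IsLoop (e : α) : Prop := M.r {e} = 0

def IsColoop (e : α) : Prop := M.r (M.E.erase e) + 1 = M.r M.E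

theorem r_singleton_le_one (he : e ∈ M.E) : M.r {e} ≤ 1 := by
  simpa using M.r_le_card {e} (singleton_subset_iff.mpr he)

theorem r_insert_le (he : e ∈ M.E) (hS : S ⊆ M.E) : M.r (insert e S) ≤ M.r S + M.r {e} := by
  have h := M.r_submod S {e} hS (singleton_subset_iff.mpr he)
  rw [union_singleton] at h
  omega

theorem r_insert_le_add_one (he : e ∈ M.E) (hS : S ⊆ M.E) : M.r (insert e S) ≤ M.r S + 1 :=
  (M.r_insert_le he hS).trans (Nat.add_le_add_left (M.r_singleton_le_one he) _)

theorem one_le_r_insert (h1 : M.r {e} = 1) (hS : insert e S ⊆ M.E) : 1 ≤ M.r (insert e S) :=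
  h1 ▸ M.r_mono {e} _ (singleton_subset_iff.mpr (mem_insert_self e S)) hS

theorem r_singleton_eq_one_of_not_isLoop (he : e ∈ M.E) (hl : ¬ M.IsLoop e) : M.r {e} = 1 := by
  have := M.r_singleton_le_one he
  unfold IsLoop at hl
  omega

theorem r_erase_eq_of_not_isColoop (he : e ∈ M.E) (hc : ¬ M.IsColoop e) :
    M.r (M.E.erase e) = M.r M.E := by
  have hle := M.r_mono _ _ (erase_subset e M.E) Subset.rfl
  have hge := M.r_insert_le_add_one he (erase_subset e M.E)
  rw [insert_erase he] at hge
  unfold IsColoop at hc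
  omega

theorem r_insert_of_isLoop (he : e ∈ M.E) (hl : M.IsLoop e) (hS : S ⊆ M.E) :
    M.r (insert e S) = M.r S := by
  have hle := M.r_insert_le he hS
  have hge := M.r_mono S (insert e S) (subset_insert e S) (insert_subset he hS)
  unfold IsLoop at hl
  omega

theorem r_insert_of_isColoop (he : e ∈ M.E) (hc : M.IsColoop e) (hS : S ⊆ M.E.erase e) :
    M.r (insert e S) = M.r S + 1 := by
  -- submodularity for `insert e S` and `E ∖ {e}`: `r(E) + r(S) ≤ r(insert e S) + r(E ∖ {e})`
  have hSE : S ⊆ M.E := hS.trans (erase_subset e M.E)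
  have hle := M.r_insert_le_add_one he hSE
  have hsub := M.r_submod (insert e S) (M.E.erase e) (insert_subset he hSE) (erase_subset e M.E)
  rw [insert_union, union_eq_right.mpr hS, insert_erase he,
    insert_inter_of_notMem (notMem_erase e M.E), inter_eq_left.mpr hS] at hsub
  unfold IsColoop at hc
  omega

def delete (e : α) : RankMatroid α where
  E := M.E.erase e
  r := M.r
  r_empty := M.r_empty
  r_le_card S hS := M.r_le_card S (hS.trans (erase_subset _ _))
  r_mono S T hST hT := M.r_mono S T hST (hT.trans (erase_subset _ _))
  r_submod S T hS hT := M.r_submod S T (hS.trans (erase_subset _ _)) (hT.trans (erase_subset _ _))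

def contract (e : α) (he : e ∈ M.E) (h1 : M.r {e} = 1) : RankMatroid α where
  E := M.E.erase e
  r S := M.r (insert e S) - 1
  r_empty := by simp [h1]
  r_le_card S hS := by
    have h := M.r_le_card (insert e S) (insert_subset he (hS.trans (erase_subset e M.E)))
    rw [card_insert_of_notMem fun h => notMem_erase e M.E (hS h)] at h
    omega
  r_mono S T hST hT := by
    have := M.r_mono _ _ (insert_subset_insert e hST) (insert_subset he (hT.trans (erase_subset _ _)))
    omega
  r_submod S T hS hT := by
    have hS' : insert e S ⊆ M.E := insert_subset he (hS.trans (erase_subset e M.E))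
    have hT' : insert e T ⊆ M.E := insert_subset he (hT.trans (erase_subset e M.E))
    have h := M.r_submod (insert e S) (insert e T) hS' hT'
    rw [← insert_union_distrib, ← insert_inter_distrib] at h
    have := M.one_le_r_insert h1 (by rw [insert_union_distrib]; exact union_subset hS' hT')
    have := M.one_le_r_insert h1 ((insert_subset_insert e (inter_subset_left (s₂ := T))).trans hS')
    omega

theorem tutte_eq_one_of_E_eq_empty (h : M.E = ∅) : M.tutte = 1 := by
  simp [tutte, h, M.r_empty]

theorem tutte_eq_sum_powerset_erase (he : e ∈ M.E) :
    M.tutte = ∑ S ∈ (M.E.erase e).powerset,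
      ((X 0 - 1) ^ (M.r M.E - M.r S) * (X 1 - 1) ^ (#S - M.r S) +
        (X 0 - 1) ^ (M.r M.E - M.r (insert e S)) * (X 1 - 1) ^ (#S + 1 - M.r (insert e S))) := by
  have h := sum_powerset_insert (notMem_erase e M.E) (f := fun S =>
    ((X 0 - 1 : MvPolynomial (Fin 2) ℤ) ^ (M.r M.E - M.r S) * (X 1 - 1) ^ (#S - M.r S)))
  rw [insert_erase he] at h
  rw [tutte, h, ← sum_add_distrib]
  refine sum_congr rfl fun S hS => ?_
  rw [card_insert_of_notMem fun h => notMem_erase e M.E (mem_powerset.mp hS h)]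

theorem tutte_delete : (M.delete e).tutte = ∑ S ∈ (M.E.erase e).powerset,
    (X 0 - 1) ^ (M.r (M.E.erase e) - M.r S) * (X 1 - 1) ^ (#S - M.r S) := rfl

theorem tutte_contract (he : e ∈ M.E) (h1 : M.r {e} = 1) :
    (M.contract e he h1).tutte = ∑ S ∈ (M.E.erase e).powerset,
      (X 0 - 1) ^ (M.r M.E - M.r (insert e S)) * (X 1 - 1) ^ (#S + 1 - M.r (insert e S)) := by
  refine sum_congr rfl fun S hS => ?_
  have hS' : insert e S ⊆ M.E := insert_subset he ((mem_powerset.mp hS).trans (erase_subset e M.E))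
  have := M.one_le_r_insert h1 hS'
  simp only [contract, insert_erase he]
  congr 2 <;> omega

theorem tutte_of_isLoop (he : e ∈ M.E) (hl : M.IsLoop e) :
    M.tutte = X 1 * (M.delete e).tutte := by
  have hr : ∀ S ⊆ M.E.erase e, M.r (insert e S) = M.r S := fun S hS =>
    M.r_insert_of_isLoop he hl (hS.trans (erase_subset e M.E))
  have hrE : M.r M.E = M.r (M.E.erase e) := by simpa [insert_erase he] using hr _ Subset.rfl
  rw [tutte_eq_sum_powerset_erase M he, hrE, tutte_delete, mul_sum]
  refine sum_congr rfl fun S hS => ?_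
  have hS := mem_powerset.mp hS
  have := M.r_le_card S (hS.trans (erase_subset e M.E))
  rw [hr S hS, show #S + 1 - M.r S = #S - M.r S + 1 by omega]
  ring

theorem tutte_of_isColoop (he : e ∈ M.E) (hc : M.IsColoop e) :
    M.tutte = X 0 * (M.delete e).tutte := by
  rw [tutte_eq_sum_powerset_erase M he, ← hc, tutte_delete, mul_sum]
  refine sum_congr rfl fun S hS => ?_
  have hS := mem_powerset.mp hS
  have := M.r_mono S _ hS (erase_subset e M.E)
  rw [M.r_insert_of_isColoop he hc hS, show M.r (M.E.erase e) + 1 - M.r S =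
    M.r (M.E.erase e) - M.r S + 1 by omega, Nat.add_sub_add_right, Nat.add_sub_add_right]
  ring

theorem tutte_eq_delete_add_contract (he : e ∈ M.E) (h1 : M.r {e} = 1)
    (hr : M.r (M.E.erase e) = M.r M.E) :
    M.tutte = (M.delete e).tutte + (M.contract e he h1).tutte := by
  rw [tutte_eq_sum_powerset_erase M he, sum_add_distrib, tutte_delete, tutte_contract, hr]

theorem coeff_tutte_nonneg (d : Fin 2 →₀ ℕ) : 0 ≤ coeff d M.tutte := by
  induction hn : #M.E generalizing M d with
  | zero => rw [M.tutte_eq_one_of_E_eq_empty (card_eq_zero.mp hn)]; exact coeff_one_nonneg d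
  | succ n ih =>
    obtain ⟨e, he⟩ := card_pos.mp (by omega : 0 < #M.E)
    have hcard : #(M.E.erase e) = n := by rw [card_erase_of_mem he]; omega
    have hdel : ∀ d, 0 ≤ coeff d (M.delete e).tutte := fun d => ih (M.delete e) d hcard
    by_cases hl : M.IsLoop e
    · rw [M.tutte_of_isLoop he hl]; exact coeff_mul_nonneg (coeff_X_nonneg 1) hdel d
    by_cases hc : M.IsColoop e
    · rw [M.tutte_of_isColoop he hc]; exact coeff_mul_nonneg (coeff_X_nonneg 0) hdel d
    rw [M.tutte_eq_delete_add_contract he (M.r_singleton_eq_one_of_not_isLoop he hl)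
      (M.r_erase_eq_of_not_isColoop he hc), coeff_add]
    exact add_nonneg (hdel d) (ih _ d hcard)

theorem coeff_zero_tutte (hE : M.E.Nonempty) : coeff 0 M.tutte = 0 := by
  have hterm : ∀ S ∈ M.E.powerset, constantCoeff
      ((X 0 - 1 : MvPolynomial (Fin 2) ℤ) ^ (M.r M.E - M.r S) * (X 1 - 1) ^ (#S - M.r S)) =
        (-1) ^ M.r M.E * (-1) ^ #S := by
    intro S hS
    have hSE := mem_powerset.mp hS
    have := M.r_mono S M.E hSE Subset.rfl
    have := M.r_le_card S hSE
    simp only [map_mul, map_pow, map_sub, constantCoeff_X, map_one, zero_sub]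
    rw [← pow_add, ← pow_add, show M.r M.E + #S = M.r M.E - M.r S + (#S - M.r S) + 2 * M.r S by
      omega, pow_add _ _ (2 * _), pow_mul]
    simp
  rw [← constantCoeff_eq, tutte, map_sum, sum_congr rfl hterm, ← mul_sum,
    sum_powerset_neg_one_pow_card_of_nonempty hE, mul_zero]

end RankMatroid

theorem tutte_coeff_nonneg_and_t00_eq_zero {α : Type*} [DecidableEq α]
    (M : RankMatroid α) (hE : M.E.Nonempty) :
    (∀ d : Fin 2 →₀ ℕ, 0 ≤ MvPolynomial.coeff d M.tutte) ∧
      MvPolynomial.coeff 0 M.tutte = 0 :=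
  ⟨M.coeff_tutte_nonneg, M.coeff_zero_tutte hE⟩
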